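/- arXiv:2512.24527 — 3 statements merged into one kernel-verified Lean document; each statement's English description precedes it below -/
import Mathlib

section
/- For every point x ∈ ℝ^d and every coordinate j ∈ {1, …, d}, the one-point randomized surrogate of the partial derivative satisfies |∂_j f(x) − E[f(x + hV) V_j] / (σ²h)| ≤ (M₂ h / σ²) · E[|V_j| · ‖V‖₂²]. -/
/-!
Expand `f (x + h • V) = f x + h ⟨∇f(x), V⟩ + R`. After multiplying by `V_j` and
integrating, the constant term vanishes because `V_j` is centred, and the linear term is
exactly `σ² h ∂_j f(x)` because the coordinates of `V` are uncorrelated with common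
variance `σ²`. What is left is `E[R V_j]`, and the Hölder condition bounds `|R|` by
`M₂ h² ‖V‖₂²`.
-/

open MeasureTheory

noncomputable def l2norm {d : ℕ} (v : Fin d → ℝ) : ℝ := Real.sqrt (∑ j, (v j) ^ 2)

lemma l2norm_sq {d : ℕ} (v : Fin d → ℝ) : l2norm v ^ 2 = ∑ j, v j ^ 2 :=
  Real.sq_sqrt (Finset.sum_nonneg fun _ _ => sq_nonneg _)

lemma l2norm_smul_sq {d : ℕ} (c : ℝ) (v : Fin d → ℝ) :
    l2norm (c • v) ^ 2 = c ^ 2 * l2norm v ^ 2 := by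
  simp only [l2norm_sq, Finset.mul_sum, Pi.smul_apply, smul_eq_mul, mul_pow]

lemma LinearMap.apply_eq_sum_mul_apply_single {ι : Type*} [Fintype ι] [DecidableEq ι]
    (L : (ι → ℝ) →ₗ[ℝ] ℝ) (v : ι → ℝ) : L v = ∑ k, v k * L (Pi.single k 1) := by
  conv_lhs => rw [← Finset.univ_sum_single v]
  simp only [map_sum]
  refine Finset.sum_congr rfl fun k _ => ?_
  rw [← smul_eq_mul, ← map_smul, ← Pi.single_smul', smul_eq_mul, mul_one]

lemma LinearMap.apply_mul_eq_sum {ι : Type*} [Fintype ι] [DecidableEq ι]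
    (L : (ι → ℝ) →ₗ[ℝ] ℝ) (v : ι → ℝ) (j : ι) :
    L v * v j = ∑ k, L (Pi.single k 1) * (v k * v j) := by
  rw [L.apply_eq_sum_mul_apply_single, Finset.sum_mul]
  exact Finset.sum_congr rfl fun k _ => by ring

section Moments

variable {ι Ω : Type*} [Fintype ι] [DecidableEq ι] [MeasurableSpace Ω] {μ : Measure Ω}
  {V : Ω → ι → ℝ} {j : ι}

lemma integrable_apply_mul_coord (L : (ι → ℝ) →ₗ[ℝ] ℝ)
    (hint : ∀ k, Integrable (fun ω => V ω k * V ω j) μ) :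
    Integrable (fun ω => L (V ω) * V ω j) μ := by
  simp_rw [L.apply_mul_eq_sum]
  exact integrable_finsetSum _ fun k _ => (hint k).const_mul _

lemma integral_apply_mul_coord (L : (ι → ℝ) →ₗ[ℝ] ℝ)
    (hint : ∀ k, Integrable (fun ω => V ω k * V ω j) μ)
    (horth : ∀ k, k ≠ j → ∫ ω, V ω k * V ω j ∂μ = 0) :
    ∫ ω, L (V ω) * V ω j ∂μ = L (Pi.single j 1) * ∫ ω, V ω j ^ 2 ∂μ := by
  simp_rw [L.apply_mul_eq_sum]
  rw [integral_finsetSum _ fun k _ => (hint k).const_mul _]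
  simp_rw [integral_const_mul]
  rw [Finset.sum_eq_single j (fun k _ hk => by rw [horth k hk, mul_zero])
    (fun hj => absurd (Finset.mem_univ j) hj)]
  simp_rw [sq]

lemma abs_integral_mul_le {R W G : Ω → ℝ} {C : ℝ} (hR : ∀ ω, |R ω| ≤ C * G ω)
    (hint : Integrable (fun ω => |W ω| * G ω) μ) :
    |∫ ω, R ω * W ω ∂μ| ≤ C * ∫ ω, |W ω| * G ω ∂μ := by
  rw [← Real.norm_eq_abs, ← integral_const_mul]
  refine norm_integral_le_of_norm_le (hint.const_mul C) (.of_forall fun ω => ?_)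
  rw [Real.norm_eq_abs, abs_mul]
  calc |R ω| * |W ω| ≤ C * G ω * |W ω| := mul_le_mul_of_nonneg_right (hR ω) (abs_nonneg _)
    _ = C * (|W ω| * G ω) := by ring

end Moments

lemma abs_taylor_remainder_smul_le {d : ℕ} {f : (Fin d → ℝ) → ℝ} {M₂ : ℝ}
    (hHolder : ∀ x y : Fin d → ℝ,
      |f y - f x - fderiv ℝ f x (y - x)| ≤ M₂ * (l2norm (y - x)) ^ 2)
    (x v : Fin d → ℝ) (h : ℝ) :
    |f (x + h • v) - f x - fderiv ℝ f x (h • v)| ≤ M₂ * h ^ 2 * l2norm v ^ 2 := by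
  simpa [l2norm_smul_sq, mul_assoc] using hHolder x (x + h • v)

lemma abs_sub_div_le_of_eq_add {g I r M E s h : ℝ} (hs : 0 < s) (hh : 0 < h)
    (hI : I = r + s * h * g) (hr : |r| ≤ M * h ^ 2 * E) :
    |g - I / (s * h)| ≤ M * h / s * E := by
  have hsh : 0 < s * h := mul_pos hs hh
  have hdiff : g - I / (s * h) = -r / (s * h) := by
    rw [hI]; field_simp; ring
  rw [hdiff, abs_div, abs_neg, abs_of_pos hsh, div_le_iff₀ hsh]
  calc |r| ≤ M * h ^ 2 * E := hr
    _ = M * h / s * E * (s * h) := by field_simp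

theorem stmt_3_general {d : ℕ} {Ω : Type*} [MeasurableSpace Ω] (μ : Measure Ω)
    (f : (Fin d → ℝ) → ℝ) (M₂ : ℝ)
    (hHolder : ∀ x y : Fin d → ℝ,
      |f y - f x - fderiv ℝ f x (y - x)| ≤ M₂ * (l2norm (y - x)) ^ 2)
    (V : Ω → (Fin d → ℝ))
    (σ : ℝ) (hσ : 0 < σ)
    (hmean : ∀ j, ∫ ω, V ω j ∂μ = 0)
    (horth : ∀ j k, j ≠ k → ∫ ω, V ω j * V ω k ∂μ = 0)
    (hvar : ∀ j, ∫ ω, (V ω j) ^ 2 ∂μ = σ ^ 2)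
    (hint3 : ∀ k, Integrable (fun ω => V ω k) μ)
    (hint4 : ∀ k l, Integrable (fun ω => V ω k * V ω l) μ)
    (h : ℝ) (hh : 0 < h) (x : Fin d → ℝ) (j : Fin d)
    (hint1 : Integrable (fun ω => f (x + h • V ω) * V ω j) μ)
    (hint2 : Integrable (fun ω => |V ω j| * (l2norm (V ω)) ^ 2) μ) :
    |fderiv ℝ f x (Pi.single j 1) -
        (∫ ω, f (x + h • V ω) * V ω j ∂μ) / (σ ^ 2 * h)| ≤
      M₂ * h / σ ^ 2 * ∫ ω, |V ω j| * (l2norm (V ω)) ^ 2 ∂μ := by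
  set L := fderiv ℝ f x
  set R : Ω → ℝ := fun ω => f (x + h • V ω) - f x - L (h • V ω)
  have hlin_int : Integrable (fun ω => L (V ω) * V ω j) μ :=
    integrable_apply_mul_coord L.toLinearMap fun k => hint4 k j
  have hconst_int : Integrable (fun ω => f (x + h • V ω) * V ω j - f x * V ω j) μ :=
    hint1.sub ((hint3 j).const_mul _)
  have hlin : ∫ ω, L (V ω) * V ω j ∂μ = σ ^ 2 * L (Pi.single j 1) := by
    rw [← hvar j, mul_comm]
    exact integral_apply_mul_coord L.toLinearMap (fun k => hint4 k j) fun k hk => horth k j hk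
  have hsplit : ∀ ω, R ω * V ω j =
      f (x + h • V ω) * V ω j - f x * V ω j - h * (L (V ω) * V ω j) := fun ω => by
    simp only [R, map_smul, smul_eq_mul]; ring
  have hdecomp : ∫ ω, f (x + h • V ω) * V ω j ∂μ =
      ∫ ω, R ω * V ω j ∂μ + σ ^ 2 * h * L (Pi.single j 1) := by
    simp_rw [hsplit]
    rw [integral_sub hconst_int (hlin_int.const_mul h),
      integral_sub hint1 ((hint3 j).const_mul _), integral_const_mul, integral_const_mul,
      hmean j, hlin]
    ring
  have hbound : |∫ ω, R ω * V ω j ∂μ| ≤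
      M₂ * h ^ 2 * ∫ ω, |V ω j| * l2norm (V ω) ^ 2 ∂μ :=
    abs_integral_mul_le (fun ω => abs_taylor_remainder_smul_le hHolder x (V ω) h) hint2
  exact abs_sub_div_le_of_eq_add (by positivity) hh hdecomp hbound

/-- One-point randomized surrogate of the partial derivative: for every `x ∈ ℝ^d` and
coordinate `j`, `|∂_j f(x) − E[f(x+hV) V_j]/(σ²h)| ≤ (M₂ h/σ²) E[|V_j| ‖V‖₂²]`. -/
theorem stmt_3 {d : ℕ} {Ω : Type*} [MeasurableSpace Ω] (μ : Measure Ω) [IsProbabilityMeasure μ]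
    (f : (Fin d → ℝ) → ℝ) (hdiff : Differentiable ℝ f) (M₂ : ℝ) (hM₂ : 0 < M₂)
    (hHolder : ∀ x y : Fin d → ℝ,
      |f y - f x - fderiv ℝ f x (y - x)| ≤ M₂ * (l2norm (y - x)) ^ 2)
    (V : Ω → (Fin d → ℝ)) (hVmeas : Measurable V)
    (σ : ℝ) (hσ : 0 < σ)
    (hmean : ∀ j, ∫ ω, V ω j ∂μ = 0)
    (horth : ∀ j k, j ≠ k → ∫ ω, V ω j * V ω k ∂μ = 0)
    (hvar : ∀ j, ∫ ω, (V ω j) ^ 2 ∂μ = σ ^ 2)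
    (hint3 : ∀ k, Integrable (fun ω => V ω k) μ)
    (hint4 : ∀ k l, Integrable (fun ω => V ω k * V ω l) μ)
    (h : ℝ) (hh : 0 < h) (x : Fin d → ℝ) (j : Fin d)
    (hint1 : Integrable (fun ω => f (x + h • V ω) * V ω j) μ)
    (hint2 : Integrable (fun ω => |V ω j| * (l2norm (V ω)) ^ 2) μ) :
    |fderiv ℝ f x (Pi.single j 1) -
        (∫ ω, f (x + h • V ω) * V ω j ∂μ) / (σ ^ 2 * h)| ≤
      M₂ * h / σ ^ 2 * ∫ ω, |V ω j| * (l2norm (V ω)) ^ 2 ∂μ :=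
  stmt_3_general μ f M₂ hHolder V σ hσ hmean horth hvar hint3 hint4 h hh x j hint1 hint2
end

section
/- Fix p ≥ 1, σ > 0 and q > 0. For each dimension d, let R₀ = R₀(d) be uniformly distributed on (0, ξ(d)) with ξ(d) := √(3σ² · Γ(1/p)Γ((d+2)/p)/(Γ(3/p)Γ(d/p))). Then E[R₀(d)^q] / d^{q/p} converges, as d → +∞, to (3^{q/2} σ^q / ((q + 1) p^{q/p})) · (Γ(1/p)/Γ(3/p))^{q/2}. -/
open MeasureTheory Real Filter Topology Set

/-!
For a uniform law, E[R₀^q] = ξ^q/(q+1), and ξ(d)² = 3σ²Γ(1/p)/Γ(3/p) · Γ(x+a)/Γ(x) with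
x = d/p, a = 2/p. Log-convexity of Γ between x and x+1 gives Wendel's bounds
(x/(x+a))^(1-a) ≤ Γ(x+a)/(Γ(x) x^a) ≤ 1 for 0 ≤ a ≤ 1, and Γ(x+1) = xΓ(x) propagates
Γ(x+a) ~ Γ(x) x^a to every a ≥ 0. Hence ξ(d)^q ~ (3σ²Γ(1/p)/Γ(3/p))^(q/2) (d/p)^(q/p).
-/

theorem Real.Gamma_add_le_Gamma_mul_rpow {x t : ℝ} (hx : 0 < x) (ht0 : 0 ≤ t) (ht1 : t ≤ 1) :
    Gamma (x + t) ≤ Gamma x * x ^ t := by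
  have hΓx : 0 < Gamma x := Gamma_pos_of_pos hx
  have hconv := convexOn_log_Gamma.2 (mem_Ioi.2 hx) (mem_Ioi.2 (by linarith : 0 < x + 1))
    (by linarith : 0 ≤ 1 - t) ht0 (by ring)
  simp only [smul_eq_mul, Function.comp_apply] at hconv
  rw [show (1 - t) * x + t * (x + 1) = x + t by ring, Gamma_add_one hx.ne'] at hconv
  have hlog : (1 - t) * log (Gamma x) + t * log (x * Gamma x) = log (Gamma x * x ^ t) := by
    rw [log_mul hx.ne' hΓx.ne', log_mul hΓx.ne' (by positivity), log_rpow hx]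
    ring
  rw [hlog] at hconv
  exact (log_le_log_iff (Gamma_pos_of_pos (by linarith)) (by positivity)).mp hconv

noncomputable def gammaRatio (a x : ℝ) : ℝ := Gamma (x + a) / (Gamma x * x ^ a)

lemma gammaRatio_pos {a x : ℝ} (hx : 0 < x) (ha : 0 ≤ a) : 0 < gammaRatio a x := by
  have := Gamma_pos_of_pos hx
  have := Gamma_pos_of_pos (by linarith : 0 < x + a)
  unfold gammaRatio; positivity

lemma gammaRatio_le_one {a x : ℝ} (hx : 0 < x) (ha0 : 0 ≤ a) (ha1 : a ≤ 1) :
    gammaRatio a x ≤ 1 :=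
  div_le_one_of_le₀ (Gamma_add_le_Gamma_mul_rpow hx ha0 ha1)
    (mul_pos (Gamma_pos_of_pos hx) (by positivity)).le

lemma gammaRatio_mul_gammaRatio_one_sub {a x : ℝ} (hx : 0 < x) (ha : 0 ≤ a) :
    gammaRatio a x * gammaRatio (1 - a) (x + a) = (x / (x + a)) ^ (1 - a) := by
  have hxa : 0 < x + a := by linarith
  have := Gamma_pos_of_pos hx
  have := Gamma_pos_of_pos hxa
  have hx1 : x ^ a * x ^ (1 - a) = x := by rw [← rpow_add hx]; norm_num
  simp only [gammaRatio, add_add_sub_cancel, Gamma_add_one hx.ne', div_rpow hx.le hxa.le]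
  field_simp
  rw [hx1]

lemma rpow_div_add_le_gammaRatio {a x : ℝ} (hx : 0 < x) (ha0 : 0 ≤ a) (ha1 : a ≤ 1) :
    (x / (x + a)) ^ (1 - a) ≤ gammaRatio a x := by
  rw [← gammaRatio_mul_gammaRatio_one_sub hx ha0]
  exact mul_le_of_le_one_right (gammaRatio_pos hx ha0).le
    (gammaRatio_le_one (by linarith) (by linarith) (by linarith))

lemma gammaRatio_add_one {a x : ℝ} (hx : 0 < x) (ha : 0 ≤ a) :
    gammaRatio (a + 1) x = gammaRatio a x * ((x + a) / x) := by
  have := Gamma_pos_of_pos hx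
  simp only [gammaRatio, ← add_assoc, Gamma_add_one (by linarith : x + a ≠ 0),
    rpow_add_one hx.ne']
  field_simp

lemma tendsto_add_const_div_self (a : ℝ) :
    Tendsto (fun x : ℝ => (x + a) / x) atTop (𝓝 1) := by
  have h := tendsto_const_nhds (x := (1 : ℝ)).add
    (tendsto_const_nhds (x := a).div_atTop tendsto_id)
  rw [add_zero] at h
  refine h.congr' ?_
  filter_upwards [eventually_gt_atTop 0] with x hx
  simp only [id]
  field_simp

lemma tendsto_gammaRatio_of_le_one {a : ℝ} (ha0 : 0 ≤ a) (ha1 : a ≤ 1) :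
    Tendsto (gammaRatio a) atTop (𝓝 1) := by
  have hlow : Tendsto (fun x : ℝ => (x / (x + a)) ^ (1 - a)) atTop (𝓝 1) := by
    have h := ((tendsto_add_const_div_self a).inv₀ one_ne_zero).rpow_const
      (Or.inr (by linarith : 0 ≤ 1 - a))
    simpa using h
  refine tendsto_of_tendsto_of_tendsto_of_le_of_le' hlow tendsto_const_nhds ?_ ?_
  · filter_upwards [eventually_gt_atTop 0] with x hx using rpow_div_add_le_gammaRatio hx ha0 ha1
  · filter_upwards [eventually_gt_atTop 0] with x hx using gammaRatio_le_one hx ha0 ha1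

theorem tendsto_gammaRatio {a : ℝ} (ha : 0 ≤ a) : Tendsto (gammaRatio a) atTop (𝓝 1) := by
  suffices ∀ n : ℕ, ∀ a : ℝ, 0 ≤ a → a ≤ n + 1 →
      Tendsto (gammaRatio a) atTop (𝓝 1) from
    this ⌈a⌉₊ a ha (by linarith [Nat.le_ceil a])
  intro n
  induction n with
  | zero => simpa using fun a => tendsto_gammaRatio_of_le_one
  | succ n ih =>
    intro a ha0 han
    rcases le_or_gt a 1 with ha1 | ha1
    · exact tendsto_gammaRatio_of_le_one ha0 ha1
    have h := (ih (a - 1) (by linarith) (by push_cast at han; linarith)).mul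
      (tendsto_add_const_div_self (a - 1))
    rw [mul_one] at h
    refine h.congr' ?_
    filter_upwards [eventually_gt_atTop 0] with x hx
    rw [← gammaRatio_add_one hx (by linarith), sub_add_cancel]

lemma integral_rpow_of_map_eq_uniform {Ω : Type*} [MeasurableSpace Ω] {μ : Measure Ω}
    {X : Ω → ℝ} (hX : AEMeasurable X μ) {ξ q : ℝ} (hξ : 0 < ξ) (hq : -1 < q)
    (hmap : μ.map X = (ENNReal.ofReal ξ)⁻¹ • volume.restrict (Ioo 0 ξ)) :
    ∫ ω, X ω ^ q ∂μ = ξ ^ q / (q + 1) := by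
  rw [← integral_map (f := fun x : ℝ => x ^ q) hX (by fun_prop), hmap, integral_smul_measure,
    ENNReal.toReal_inv, ENNReal.toReal_ofReal hξ.le, ← integral_Ioc_eq_integral_Ioo,
    ← intervalIntegral.integral_of_le hξ.le, integral_rpow (Or.inl hq),
    zero_rpow (by linarith), rpow_add_one hξ.ne', smul_eq_mul]
  field_simp
  ring

lemma sqrt_mul_Gamma_div_rpow_div_rpow {K p d q : ℝ} (hK : 0 ≤ K) (hp : 0 < p) (hd : 0 < d) :
    √(K * Gamma ((d + 2) / p) / Gamma (d / p)) ^ q / d ^ (q / p)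
      = (K / p ^ (2 / p) * gammaRatio (2 / p) (d / p)) ^ (q / 2) := by
  have hdp : 0 < d / p := by positivity
  have hΓ : Gamma ((d + 2) / p) / Gamma (d / p)
      = gammaRatio (2 / p) (d / p) * (d ^ (2 / p) / p ^ (2 / p)) := by
    have := Gamma_pos_of_pos hdp
    rw [gammaRatio, ← add_div, ← div_rpow hd.le hp.le]
    field_simp
  have hr : 0 ≤ gammaRatio (2 / p) (d / p) := (gammaRatio_pos hdp (by positivity)).le
  rw [mul_div_assoc, hΓ, sqrt_eq_rpow, ← rpow_mul (by positivity),
    show d ^ (q / p) = (d ^ (2 / p)) ^ (q / 2) by rw [← rpow_mul hd.le]; ring_nf,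
    show 1 / 2 * q = q / 2 by ring, ← div_rpow (by positivity) (by positivity)]
  congr 1
  field_simp

theorem stmt_7_general {Ω : Type*} [MeasurableSpace Ω] (μ : Measure Ω)
    (p σ q : ℝ) (hp : 1 ≤ p) (hσ : 0 < σ) (hq : 0 < q)
    (ξ : ℕ → ℝ)
    (hξ : ∀ d : ℕ, ξ d = Real.sqrt (3 * σ ^ 2 *
      (Gamma (1 / p) * Gamma (((d : ℝ) + 2) / p)) / (Gamma (3 / p) * Gamma ((d : ℝ) / p))))
    (R₀ : ℕ → Ω → ℝ) (hmeas : ∀ d, Measurable (R₀ d))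
    (hunif : ∀ d : ℕ, 1 ≤ d →
      Measure.map (R₀ d) μ = (ENNReal.ofReal (ξ d))⁻¹ • volume.restrict (Set.Ioo 0 (ξ d))) :
    Filter.Tendsto (fun d : ℕ => (∫ ω, R₀ d ω ^ q ∂μ) / (d : ℝ) ^ (q / p)) Filter.atTop
      (nhds ((3 ^ (q / 2) * σ ^ q / ((q + 1) * p ^ (q / p))) *
        (Gamma (1 / p) / Gamma (3 / p)) ^ (q / 2))) := by
  have hp0 : 0 < p := by linarith
  set K := 3 * σ ^ 2 * (Gamma (1 / p) / Gamma (3 / p)) with hK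
  have hΓ1 := Gamma_pos_of_pos (by positivity : 0 < 1 / p)
  have hΓ3 := Gamma_pos_of_pos (by positivity : 0 < 3 / p)
  have hlim : Tendsto
      (fun d : ℕ => (K / p ^ (2 / p) * gammaRatio (2 / p) (d / p)) ^ (q / 2) / (q + 1))
      atTop (𝓝 ((K / p ^ (2 / p) * 1) ^ (q / 2) / (q + 1))) :=
    (((tendsto_gammaRatio (by positivity)).comp
      (tendsto_natCast_atTop_atTop.atTop_div_const hp0)).const_mul _ |>.rpow_const
      (Or.inr (by positivity))).div_const _
  convert hlim.congr' ?_ using 2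
  · have hσq : (σ ^ 2) ^ (q / 2) = σ ^ q := by
      rw [← rpow_natCast, ← rpow_mul hσ.le]; ring_nf
    have hpq : (p ^ (2 / p)) ^ (q / 2) = p ^ (q / p) := by rw [← rpow_mul hp0.le]; ring_nf
    rw [mul_one, div_rpow (x := K) (by positivity) (by positivity), hpq, hK,
      mul_rpow (by positivity) (by positivity), mul_rpow (by positivity) (by positivity), hσq]
    field_simp
  filter_upwards [eventually_ge_atTop 1] with d hd
  have hd0 : (0 : ℝ) < d := by exact_mod_cast hd
  have hξd : ξ d = √(K * Gamma ((d + 2) / p) / Gamma (d / p)) := by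
    rw [hξ d, hK]; congr 1; ring
  have hξ0 : 0 < ξ d := by
    have := Gamma_pos_of_pos (by positivity : 0 < ((d : ℝ) + 2) / p)
    have := Gamma_pos_of_pos (by positivity : 0 < (d : ℝ) / p)
    rw [hξd]; positivity
  rw [integral_rpow_of_map_eq_uniform (hmeas d).aemeasurable hξ0 (by linarith) (hunif d hd),
    div_right_comm, hξd, sqrt_mul_Gamma_div_rpow_div_rpow (by positivity) hp0 hd0]

/-- Fix `p ≥ 1`, `σ > 0`, `q > 0`. If, for each dimension `d`, `R₀(d)` is uniformly
distributed on `(0, ξ(d))` with `ξ(d) := √(3σ² Γ(1/p)Γ((d+2)/p)/(Γ(3/p)Γ(d/p)))`, then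
`E[R₀(d)^q]/d^{q/p} → (3^{q/2} σ^q/((q+1) p^{q/p})) (Γ(1/p)/Γ(3/p))^{q/2}` as `d → +∞`. -/
theorem stmt_7 {Ω : Type*} [MeasurableSpace Ω] (μ : Measure Ω) [IsProbabilityMeasure μ]
    (p σ q : ℝ) (hp : 1 ≤ p) (hσ : 0 < σ) (hq : 0 < q)
    (ξ : ℕ → ℝ)
    (hξ : ∀ d : ℕ, ξ d = Real.sqrt (3 * σ ^ 2 *
      (Gamma (1 / p) * Gamma (((d : ℝ) + 2) / p)) / (Gamma (3 / p) * Gamma ((d : ℝ) / p))))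
    (R₀ : ℕ → Ω → ℝ) (hmeas : ∀ d, Measurable (R₀ d))
    (hunif : ∀ d : ℕ, 1 ≤ d →
      Measure.map (R₀ d) μ = (ENNReal.ofReal (ξ d))⁻¹ • volume.restrict (Set.Ioo 0 (ξ d))) :
    Filter.Tendsto (fun d : ℕ => (∫ ω, R₀ d ω ^ q ∂μ) / (d : ℝ) ^ (q / p)) Filter.atTop
      (nhds ((3 ^ (q / 2) * σ ^ q / ((q + 1) * p ^ (q / p))) *
        (Gamma (1 / p) / Gamma (3 / p)) ^ (q / 2))) :=
  stmt_7_general μ p σ q hp hσ hq ξ hξ R₀ hmeas hunif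
end

section
/- Let U be a random vector in ℝ^d and R a strictly positive real random variable independent of U. Let p ≥ 1, q > 0 and C, c₀ > 0 be constants, and assume that for every L > 0, every L-Lipschitz function f : ℝ^d → ℝ (with respect to the Euclidean norm) and every t > 0, P(|f(U) − f(0)| ≥ t) ≤ C · exp(−c₀ d t^p / L^p). Then for every L₀-Lipschitz function g : ℝ^d → ℝ with E[R^{2q}] < ∞, E[R^q · |g(R·U) − g(0)|^q] ≤ (q C Γ(q/p) / (p c₀^{q/p})) · (L₀^q / d^{q/p}) · E[R^{2q}]. -/
/-!
For fixed `r > 0` the map `u ↦ g (r • u)` is `r L₀`-Lipschitz, so concentration bounds the tail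
of `|g (r • U) - g 0|` by `C exp (-c₀ d t^p / (r L₀)^p)`. The layer-cake formula and
`∫₀^∞ t^(q-1) exp (-b t^p) dt = Γ(q/p) / (p b^(q/p))` turn this into
`E |g (r • U) - g 0|^q ≤ K r^q` with `K = q C Γ(q/p) L₀^q / (p (c₀ d)^(q/p))`. By independence
we may integrate over `U` with `R = r` frozen, and `E[R^q · K R^q] = K E[R^(2q)]`.
-/

open MeasureTheory ProbabilityTheory
open scoped ENNReal

theorem lintegral_rpow_le_of_meas_le_exp {α : Type*} [MeasurableSpace α] {ν : Measure α}
    {X : α → ℝ} (hX0 : 0 ≤ᵐ[ν] X) (hXm : AEMeasurable X ν) {p q b C : ℝ}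
    (hp : 0 < p) (hq : 0 < q) (hb : 0 < b) (hC : 0 ≤ C)
    (htail : ∀ t : ℝ, 0 < t → ν {x | t ≤ X x} ≤ ENNReal.ofReal (C * Real.exp (-b * t ^ p))) :
    ∫⁻ x, ENNReal.ofReal (X x ^ q) ∂ν ≤
      ENNReal.ofReal (q * C * Real.Gamma (q / p) / (p * b ^ (q / p))) := by
  have hint : IntegrableOn (fun t : ℝ => C * (t ^ (q - 1) * Real.exp (-b * t ^ p)))
      (Set.Ioi 0) :=
    (integrableOn_rpow_mul_exp_neg_mul_rpow (by linarith) hp hb).const_mul C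
  have hgamma : ∫ t in Set.Ioi (0 : ℝ), C * (t ^ (q - 1) * Real.exp (-b * t ^ p)) =
      C * Real.Gamma (q / p) / (p * b ^ (q / p)) := by
    rw [integral_const_mul, integral_rpow_mul_exp_neg_mul_rpow hp (by linarith) hb,
      sub_add_cancel, neg_div, Real.rpow_neg hb.le]
    field_simp
  rw [lintegral_rpow_eq_lintegral_meas_le_mul ν hX0 hXm hq, mul_assoc, mul_div_assoc,
    ENNReal.ofReal_mul hq.le, ← hgamma,
    ofReal_integral_eq_lintegral_ofReal hint (ae_restrict_of_forall_mem measurableSet_Ioi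
      fun t (ht : 0 < t) => by positivity)]
  gcongr ENNReal.ofReal q * ?_
  refine setLIntegral_mono' measurableSet_Ioi fun t (ht : 0 < t) => ?_
  calc ν {x | t ≤ X x} * ENNReal.ofReal (t ^ (q - 1))
      ≤ ENNReal.ofReal (C * Real.exp (-b * t ^ p)) * ENNReal.ofReal (t ^ (q - 1)) := by
        gcongr; exact htail t ht
    _ = ENNReal.ofReal (C * (t ^ (q - 1) * Real.exp (-b * t ^ p))) := by
        rw [← ENNReal.ofReal_mul (by positivity)]; ring_nf

theorem LipschitzWith.comp_smul_left {E F : Type*} [SeminormedAddCommGroup E] [NormedSpace ℝ E]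
    [PseudoEMetricSpace F] {g : E → F} {L r : ℝ} (hg : LipschitzWith L.toNNReal g) (hr : 0 ≤ r) :
    LipschitzWith (r * L).toNNReal fun u => g (r • u) := by
  rw [Real.toNNReal_mul hr, mul_comm, Real.toNNReal_of_nonneg hr, ← Real.nnnorm_of_nonneg hr]
  exact hg.comp (lipschitzWith_smul r)

theorem integral_le_integral_of_lintegral_ofReal_le {α : Type*} [MeasurableSpace α]
    {μ : Measure α} {f g : α → ℝ} (hf : 0 ≤ᵐ[μ] f) (hfm : AEStronglyMeasurable f μ)
    (hg : Integrable g μ) (hg0 : 0 ≤ᵐ[μ] g)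
    (h : ∫⁻ x, ENNReal.ofReal (f x) ∂μ ≤ ∫⁻ x, ENNReal.ofReal (g x) ∂μ) :
    ∫ x, f x ∂μ ≤ ∫ x, g x ∂μ := by
  rw [integral_eq_lintegral_of_nonneg_ae hf hfm, integral_eq_lintegral_of_nonneg_ae hg0
    hg.aestronglyMeasurable]
  exact ENNReal.toReal_mono (hasFiniteIntegral_iff_ofReal hg0 |>.mp hg.2).ne h

def LipschitzConcentration {Ω E : Type*} [MeasurableSpace Ω] [Zero E] [PseudoMetricSpace E]
    (μ : Measure Ω) (U : Ω → E) (p C c : ℝ) : Prop :=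
  ∀ L : ℝ, 0 < L → ∀ f : E → ℝ, LipschitzWith (Real.toNNReal L) f → ∀ t : ℝ, 0 < t →
    μ {ω | t ≤ |f (U ω) - f 0|} ≤ ENNReal.ofReal (C * Real.exp (-(c * t ^ p) / L ^ p))

theorem LipschitzConcentration.lintegral_rpow_le {Ω E : Type*} [MeasurableSpace Ω]
    [Zero E] [PseudoMetricSpace E] [MeasurableSpace E] [OpensMeasurableSpace E]
    {μ : Measure Ω} {U : Ω → E} {p C c : ℝ} (hconc : LipschitzConcentration μ U p C c)
    (hU : Measurable U) (hp : 0 < p) (hC : 0 ≤ C) (hc : 0 < c) {q L : ℝ} (hq : 0 < q)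
    (hL : 0 < L) {f : E → ℝ} (hf : LipschitzWith (Real.toNNReal L) f) :
    ∫⁻ ω, ENNReal.ofReal (|f (U ω) - f 0| ^ q) ∂μ ≤
      ENNReal.ofReal (q * C * Real.Gamma (q / p) / (p * c ^ (q / p)) * L ^ q) := by
  have hrate : (c / L ^ p) ^ (q / p) = c ^ (q / p) / L ^ q := by
    rw [Real.div_rpow hc.le (by positivity), ← Real.rpow_mul hL.le, mul_div_cancel₀ _ hp.ne']
  have hdev : Measurable fun ω => |f (U ω) - f 0| :=
    ((hf.continuous.measurable.comp hU).sub_const _).abs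
  have hbound := lintegral_rpow_le_of_meas_le_exp (b := c / L ^ p)
    (ae_of_all _ fun ω => abs_nonneg _) hdev.aemeasurable hp hq (div_pos hc (by positivity)) hC
    fun t ht => by convert hconc L hL f hf t ht using 4; ring
  rw [hrate] at hbound
  convert hbound using 2
  field_simp

theorem ProbabilityTheory.IndepFun.lintegral_comp_eq_lintegral_lintegral
    {Ω β γ : Type*} [MeasurableSpace Ω] {μ : Measure Ω} [IsFiniteMeasure μ]
    [MeasurableSpace β] [MeasurableSpace γ] {X : Ω → β} {Y : Ω → γ}
    (hXY : IndepFun X Y μ) (hX : Measurable X) (hY : Measurable Y)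
    {F : β × γ → ℝ≥0∞} (hF : Measurable F) :
    ∫⁻ ω, F (X ω, Y ω) ∂μ = ∫⁻ ω, ∫⁻ ω', F (X ω, Y ω') ∂μ ∂μ := by
  rw [← lintegral_map hF (hX.prodMk hY), hXY.map_prod_eq_prod_map_map hX.aemeasurable
    hY.aemeasurable, lintegral_prod _ hF.aemeasurable, lintegral_map hF.lintegral_prod_right' hX]
  refine lintegral_congr fun ω => ?_
  exact lintegral_map (hF.comp measurable_prodMk_left) hY

theorem lintegral_rpow_mul_comp_smul_le_of_indepFun {Ω E : Type*} [MeasurableSpace Ω]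
    {μ : Measure Ω} [IsFiniteMeasure μ] [NormedAddCommGroup E] [NormedSpace ℝ E]
    [MeasurableSpace E] [BorelSpace E] [SecondCountableTopology E]
    {R : Ω → ℝ} {U : Ω → E} (hRU : IndepFun R U μ) (hR : Measurable R) (hU : Measurable U)
    (hRpos : ∀ ω, 0 < R ω) {g : E → ℝ} (hg : Continuous g) {q K : ℝ}
    (hmoment : ∀ r : ℝ, 0 < r →
      ∫⁻ ω, ENNReal.ofReal (|g (r • U ω) - g 0| ^ q) ∂μ ≤ ENNReal.ofReal (K * r ^ q)) :
    ∫⁻ ω, ENNReal.ofReal (R ω ^ q * |g (R ω • U ω) - g 0| ^ q) ∂μ ≤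
      ∫⁻ ω, ENNReal.ofReal (K * R ω ^ (2 * q)) ∂μ := by
  have hF : Measurable fun x : ℝ × E => ENNReal.ofReal (x.1 ^ q * |g (x.1 • x.2) - g 0| ^ q) := by
    fun_prop
  rw [hRU.lintegral_comp_eq_lintegral_lintegral hR hU hF]
  refine lintegral_mono fun ω => ?_
  have hRq : 0 ≤ R ω ^ q := Real.rpow_nonneg (hRpos ω).le q
  calc ∫⁻ ω', ENNReal.ofReal (R ω ^ q * |g (R ω • U ω') - g 0| ^ q) ∂μ
      = ENNReal.ofReal (R ω ^ q) * ∫⁻ ω', ENNReal.ofReal (|g (R ω • U ω') - g 0| ^ q) ∂μ := by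
        simp_rw [ENNReal.ofReal_mul hRq]
        exact lintegral_const_mul' _ _ ENNReal.ofReal_ne_top
    _ ≤ ENNReal.ofReal (R ω ^ q) * ENNReal.ofReal (K * R ω ^ q) := by
        gcongr; exact hmoment _ (hRpos ω)
    _ = ENNReal.ofReal (K * R ω ^ (2 * q)) := by
        rw [← ENNReal.ofReal_mul hRq, two_mul, Real.rpow_add (hRpos ω)]
        ring_nf

/-- If `U` satisfies the `p`-exponential concentration property for Lipschitz functions and
`R > 0` is independent of `U`, then for every `L₀`-Lipschitz `g` with `E[R^{2q}] < ∞`,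
`E[R^q |g(R·U) − g(0)|^q] ≤ (q C Γ(q/p)/(p c₀^{q/p})) (L₀^q/d^{q/p}) E[R^{2q}]`. -/
theorem stmt_10 {Ω : Type*} [MeasurableSpace Ω] (μ : Measure Ω) [IsProbabilityMeasure μ]
    {d : ℕ} (hd : 0 < d)
    (U : Ω → EuclideanSpace ℝ (Fin d)) (R : Ω → ℝ)
    (hUmeas : Measurable U) (hRmeas : Measurable R)
    (hRpos : ∀ ω, 0 < R ω) (hindep : ProbabilityTheory.IndepFun R U μ)
    (p q C c₀ : ℝ) (hp : 1 ≤ p) (hq : 0 < q) (hC : 0 < C) (hc₀ : 0 < c₀)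
    (hconc : ∀ L : ℝ, 0 < L → ∀ f : EuclideanSpace ℝ (Fin d) → ℝ,
      LipschitzWith (Real.toNNReal L) f → ∀ t : ℝ, 0 < t →
        μ {ω | t ≤ |f (U ω) - f 0|} ≤
          ENNReal.ofReal (C * Real.exp (-(c₀ * d * t ^ p) / L ^ p)))
    (L₀ : ℝ) (hL₀ : 0 < L₀)
    (g : EuclideanSpace ℝ (Fin d) → ℝ) (hg : LipschitzWith (Real.toNNReal L₀) g)
    (hR : Integrable (fun ω => R ω ^ (2 * q)) μ) :
    ∫ ω, R ω ^ q * |g (R ω • U ω) - g 0| ^ q ∂μ ≤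
      (q * C * Real.Gamma (q / p) / (p * c₀ ^ (q / p))) * (L₀ ^ q / (d : ℝ) ^ (q / p)) *
        ∫ ω, R ω ^ (2 * q) ∂μ := by
  have hp0 : 0 < p := by linarith
  have hd0 : (0 : ℝ) < d := Nat.cast_pos.mpr hd
  have hconc' : LipschitzConcentration μ U p C (c₀ * d) := hconc
  set K := (q * C * Real.Gamma (q / p) / (p * c₀ ^ (q / p))) * (L₀ ^ q / (d : ℝ) ^ (q / p))
  have hmoment (r : ℝ) (hr : 0 < r) :
      ∫⁻ ω, ENNReal.ofReal (|g (r • U ω) - g 0| ^ q) ∂μ ≤ ENNReal.ofReal (K * r ^ q) := by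
    have hbound := hconc'.lintegral_rpow_le hUmeas hp0 hC.le (by positivity) hq (mul_pos hr hL₀)
      (hg.comp_smul_left hr.le)
    rw [smul_zero] at hbound
    convert hbound using 2
    rw [Real.mul_rpow hc₀.le hd0.le, Real.mul_rpow hr.le hL₀.le]
    ring
  have hRpow (s : ℝ) (ω : Ω) : 0 ≤ R ω ^ s := Real.rpow_nonneg (hRpos ω).le s
  rw [← integral_const_mul]
  refine integral_le_integral_of_lintegral_ofReal_le
    (ae_of_all _ fun ω => mul_nonneg (hRpow q ω) (by positivity))
    (by have := hg.continuous; fun_prop (disch := exact hq.le)) (hR.const_mul K)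
    (ae_of_all _ fun ω => mul_nonneg (by positivity) (hRpow _ ω)) ?_
  exact lintegral_rpow_mul_comp_smul_le_of_indepFun hindep hRmeas hUmeas hRpos hg.continuous
    hmoment
end
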